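/- arXiv:1501.03436 — 2 statements merged into one kernel-verified Lean document; each statement's English description precedes it below -/
import Mathlib

section
/- Let G be a connected finite simple graph on at least two vertices with maximum degree Δ and minimum degree δ, let H be the complete graph K_k on k ≥ 3 vertices, and let H' be obtained from K_k by removing exactly one edge. Then (δ² / (4Δ²)) · λ(G, K_k) ≤ λ(G, H') ≤ (4Δ² / δ²) · λ(G, K_k). -/
open scoped Classical
open Finset

/-- Degree of a vertex in a finite simple graph. -/
noncomputable def gdeg {V : Type*} [Fintype V] (G : SimpleGraph V) (v : V) : ℕ :=
  (G.neighborSet v).ncard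

/-- The volume of a finite simple graph: the sum of the degrees of all vertices. -/
noncomputable def gvol {V : Type*} [Fintype V] (G : SimpleGraph V) : ℕ :=
  ∑ v, gdeg G v

/-- The Rayleigh-type quotient `R_f(G, X)` for an embedding `f : V(G) → X` where `X`
carries a distance function `d`.  The sum over ordered pairs of adjacent vertices divided
by `2` is the sum over edges of `G`; the sum over ordered pairs of distinct vertices divided
by `2` is the sum over unordered pairs of distinct vertices of `G`. -/
noncomputable def Rf {V X : Type*} [Fintype V] (G : SimpleGraph V) (d : X → X → ℝ)
    (f : V → X) : ℝ :=
  ((gvol G : ℝ) * ((∑ u, ∑ v, if G.Adj u v then d (f u) (f v) ^ 2 else 0) / 2)) /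
    ((∑ u, ∑ v, if u ≠ v then d (f u) (f v) ^ 2 * (gdeg G u : ℝ) * (gdeg G v : ℝ) else 0) / 2)

/-- `lam G d` is `λ(G, X)`: the infimum of `R_f(G, X)` over nonconstant `f : V(G) → X`. -/
noncomputable def lam {V X : Type*} [Fintype V] (G : SimpleGraph V) (d : X → X → ℝ) : ℝ :=
  sInf {r | ∃ f : V → X, (∃ u v, f u ≠ f v) ∧ r = Rf G d f}

/-- The diameter of a finite simple graph: the maximum shortest-path distance over pairs. -/
noncomputable def gDiam {V : Type*} [Fintype V] (H : SimpleGraph V) : ℕ :=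
  Finset.univ.sup fun p : V × V => H.dist p.1 p.2

/-- The maximum degree of a finite simple graph. -/
noncomputable def gMaxDeg {V : Type*} [Fintype V] (G : SimpleGraph V) : ℕ :=
  Finset.univ.sup (gdeg G)

/-- The minimum degree of a finite simple graph. -/
noncomputable def gMinDeg {V : Type*} [Fintype V] (G : SimpleGraph V) : ℕ :=
  sInf (Set.range (gdeg G))

/-!
Removing one edge `ij` from `K_k` with `k ≥ 3` keeps a common neighbour of `i` and `j`, so the new
distance lies between `d_{K_k}` and `2 d_{K_k}`. After squaring, both the edge sum and the
degree-weighted pair sum in `R_f` change by a factor in `[1, 4]`, so `R_f`, and with it the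
infimum `λ`, changes by a factor at most `4` in either direction. As `0 < δ ≤ Δ` for a
connected graph on at least two vertices, `δ²/(4Δ²) ≤ 1/4` and `4 ≤ 4Δ²/δ²`.
-/

lemma div_le_mul_div_of_le_mul {a b a' b' C : ℝ} (ha : 0 ≤ a) (hb : 0 ≤ b)
    (ha' : a' ≤ C * a) (hbb' : b ≤ b') (hb'b : b' ≤ C * b) : a' / b' ≤ C * (a / b) := by
  rcases hb.eq_or_lt with rfl | hb
  · simp [le_antisymm (by simpa using hb'b) hbb']
  · have hC : 1 ≤ C := le_of_mul_le_mul_right (by linarith) hb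
    rw [← mul_div_assoc]
    exact div_le_div₀ (by positivity) ha' hb hbb'

lemma div_le_mul_div_of_le {a b a' b' C : ℝ} (ha : 0 ≤ a) (hb : 0 ≤ b)
    (haa' : a ≤ a') (hbb' : b ≤ b') (hb'b : b' ≤ C * b) : a / b ≤ C * (a' / b') := by
  rcases hb.eq_or_lt with rfl | hb
  · simp [le_antisymm (by simpa using hb'b) hbb']
  · have hC : 1 ≤ C := le_of_mul_le_mul_right (by linarith) hb
    rw [← mul_div_assoc, div_le_div_iff₀ hb (hb.trans_le hbb')]
    nlinarith

lemma top_deleteEdges_exists_walk_length_le_two {W : Type*} [Fintype W]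
    (hW : 3 ≤ Fintype.card W) (e : Sym2 W) (a b : W) :
    ∃ p : ((⊤ : SimpleGraph W).deleteEdges {e}).Walk a b, p.length ≤ 2 := by
  classical
  by_cases hab : a = b
  · subst hab
    exact ⟨.nil, by simp⟩
  by_cases he : s(a, b) = e
  · have hcard : ({a, b} : Finset W).card < (Finset.univ : Finset W).card := by
      rw [Finset.card_univ]; exact Finset.card_le_two.trans_lt (by omega)
    obtain ⟨c, -, hc⟩ := Finset.exists_mem_notMem_of_card_lt_card hcard
    simp only [Finset.mem_insert, Finset.mem_singleton, not_or] at hc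
    subst he
    have hac : ((⊤ : SimpleGraph W).deleteEdges {s(a, b)}).Adj a c := by
      simp [hab, hc.2, Ne.symm hc.1]
    have hcb : ((⊤ : SimpleGraph W).deleteEdges {s(a, b)}).Adj c b := by
      simp [hc.1, hc.2]
    exact ⟨.cons hac (.cons hcb .nil), le_rfl⟩
  · exact ⟨.cons (by simpa [hab] using he) .nil, by simp⟩

lemma top_deleteEdges_dist_le_two_mul {W : Type*} [Fintype W] (hW : 3 ≤ Fintype.card W)
    (e : Sym2 W) (a b : W) :
    (⊤ : SimpleGraph W).dist a b ≤ ((⊤ : SimpleGraph W).deleteEdges {e}).dist a b ∧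
      ((⊤ : SimpleGraph W).deleteEdges {e}).dist a b ≤ 2 * (⊤ : SimpleGraph W).dist a b := by
  obtain ⟨p, hp⟩ := top_deleteEdges_exists_walk_length_le_two hW e a b
  refine ⟨SimpleGraph.Reachable.dist_anti (SimpleGraph.deleteEdges_le _) ⟨p⟩, ?_⟩
  rcases eq_or_ne a b with rfl | hab
  · simp
  · rw [SimpleGraph.dist_top_of_ne hab]
    exact (SimpleGraph.dist_le p).trans hp

section Quotient

variable {V X : Type*} [Fintype V] (G : SimpleGraph V)

noncomputable def edgeDistSqSum (d : X → X → ℝ) (f : V → X) : ℝ :=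
  ∑ u, ∑ v, if G.Adj u v then d (f u) (f v) ^ 2 else 0

noncomputable def pairDistSqSum (d : X → X → ℝ) (f : V → X) : ℝ :=
  ∑ u, ∑ v, if u ≠ v then d (f u) (f v) ^ 2 * (gdeg G u : ℝ) * (gdeg G v : ℝ) else 0

variable {G} {d d' : X → X → ℝ} {c : ℝ} (f : V → X)

lemma Rf_eq_div : Rf G d f = gvol G * edgeDistSqSum G d f / pairDistSqSum G d f := by
  unfold Rf edgeDistSqSum pairDistSqSum
  ring

lemma edgeDistSqSum_nonneg : 0 ≤ edgeDistSqSum G d f :=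
  Finset.sum_nonneg fun _ _ => Finset.sum_nonneg fun _ _ => by split_ifs <;> positivity

lemma pairDistSqSum_nonneg : 0 ≤ pairDistSqSum G d f :=
  Finset.sum_nonneg fun _ _ => Finset.sum_nonneg fun _ _ => by split_ifs <;> positivity

lemma Rf_nonneg : 0 ≤ Rf G d f := by
  rw [Rf_eq_div]
  have := edgeDistSqSum_nonneg (G := G) (d := d) f
  have := pairDistSqSum_nonneg (G := G) (d := d) f
  positivity

lemma edgeDistSqSum_mono (h₀ : ∀ x y, 0 ≤ d x y) (h : ∀ x y, d x y ≤ d' x y) :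
    edgeDistSqSum G d f ≤ edgeDistSqSum G d' f :=
  Finset.sum_le_sum fun _ _ => Finset.sum_le_sum fun _ _ => by
    split_ifs
    · gcongr
      exacts [h₀ _ _, h _ _]
    · rfl

lemma pairDistSqSum_mono (h₀ : ∀ x y, 0 ≤ d x y) (h : ∀ x y, d x y ≤ d' x y) :
    pairDistSqSum G d f ≤ pairDistSqSum G d' f :=
  Finset.sum_le_sum fun _ _ => Finset.sum_le_sum fun _ _ => by
    split_ifs
    · gcongr
      exacts [h₀ _ _, h _ _]
    · rfl

lemma edgeDistSqSum_const_mul (c : ℝ) :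
    edgeDistSqSum G (fun x y => c * d x y) f = c ^ 2 * edgeDistSqSum G d f := by
  simp only [edgeDistSqSum, Finset.mul_sum, mul_ite, mul_zero, mul_pow]

lemma pairDistSqSum_const_mul (c : ℝ) :
    pairDistSqSum G (fun x y => c * d x y) f = c ^ 2 * pairDistSqSum G d f := by
  simp only [pairDistSqSum, Finset.mul_sum, mul_ite, mul_zero, mul_pow, mul_assoc]

end Quotient

section Comparison

variable {V X : Type*} [Fintype V] {G : SimpleGraph V} {d d' : X → X → ℝ} {c : ℝ}

lemma Rf_le_sq_mul_Rf (h₀ : ∀ x y, 0 ≤ d x y) (hle : ∀ x y, d x y ≤ d' x y)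
    (hle' : ∀ x y, d' x y ≤ c * d x y) (f : V → X) :
    Rf G d' f ≤ c ^ 2 * Rf G d f ∧ Rf G d f ≤ c ^ 2 * Rf G d' f := by
  have h₀' x y : 0 ≤ d' x y := (h₀ x y).trans (hle x y)
  have hN := edgeDistSqSum_mono (G := G) f h₀ hle
  have hN' : edgeDistSqSum G d' f ≤ c ^ 2 * edgeDistSqSum G d f :=
    (edgeDistSqSum_mono f h₀' hle').trans_eq (edgeDistSqSum_const_mul f c)
  have hD := pairDistSqSum_mono (G := G) f h₀ hle
  have hD' : pairDistSqSum G d' f ≤ c ^ 2 * pairDistSqSum G d f :=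
    (pairDistSqSum_mono f h₀' hle').trans_eq (pairDistSqSum_const_mul f c)
  have hN₀ := edgeDistSqSum_nonneg (G := G) (d := d) f
  have hD₀ := pairDistSqSum_nonneg (G := G) (d := d) f
  simp only [Rf_eq_div, mul_div_assoc, mul_left_comm _ (gvol G : ℝ)]
  constructor
  · gcongr
    exact div_le_mul_div_of_le_mul hN₀ hD₀ hN' hD hD'
  · gcongr
    exact div_le_mul_div_of_le hN₀ hD₀ hN hD hD'

lemma lam_eq_iInf (d : X → X → ℝ) :
    lam G d = ⨅ f : {f : V → X // ∃ u v, f u ≠ f v}, Rf G d f := by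
  rw [lam, iInf, Set.range]
  congr 1
  ext r
  simp [eq_comm]

lemma lam_nonneg (d : X → X → ℝ) : 0 ≤ lam G d :=
  Real.sInf_nonneg (by rintro r ⟨f, -, rfl⟩; exact Rf_nonneg f)

lemma lam_le_mul_lam {C : ℝ} (hC : 0 ≤ C) (h : ∀ f : V → X, Rf G d' f ≤ C * Rf G d f) :
    lam G d' ≤ C * lam G d := by
  have hbdd : BddBelow (Set.range fun f : {f : V → X // ∃ u v, f u ≠ f v} => Rf G d' f) :=
    ⟨0, by rintro _ ⟨f, rfl⟩; exact Rf_nonneg _⟩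
  rw [lam_eq_iInf, lam_eq_iInf, Real.mul_iInf_of_nonneg hC]
  exact ciInf_mono hbdd fun f => h f

end Comparison

lemma gMinDeg_pos {V : Type*} [Fintype V] [Nontrivial V] {G : SimpleGraph V}
    (hG : G.Preconnected) : 0 < gMinDeg G := by
  obtain ⟨v, hv⟩ := Nat.sInf_mem (Set.range_nonempty (gdeg G))
  rw [gMinDeg, ← hv, gdeg, Set.ncard_pos (Set.toFinite _)]
  exact hG.exists_adj_of_nontrivial v

lemma gMinDeg_le_gMaxDeg {V : Type*} [Fintype V] [Nonempty V] (G : SimpleGraph V) :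
    gMinDeg G ≤ gMaxDeg G := by
  obtain ⟨v⟩ := ‹Nonempty V›
  exact (Nat.sInf_le (Set.mem_range_self v)).trans (Finset.le_sup (Finset.mem_univ v))

theorem stmt_11_general {V : Type*} [Fintype V] (G : SimpleGraph V)
    (hG : G.Connected) (hV : 2 ≤ Fintype.card V)
    (k : ℕ) (hk : 3 ≤ k) (i j : Fin k)
    (H' : SimpleGraph (Fin k))
    (hH' : H' = (⊤ : SimpleGraph (Fin k)).deleteEdges {s(i, j)}) :
    (gMinDeg G : ℝ) ^ 2 / (4 * (gMaxDeg G : ℝ) ^ 2) *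
        lam G (fun a b : Fin k => ((⊤ : SimpleGraph (Fin k)).dist a b : ℝ))
      ≤ lam G (fun a b => (H'.dist a b : ℝ)) ∧
    lam G (fun a b => (H'.dist a b : ℝ)) ≤
      4 * (gMaxDeg G : ℝ) ^ 2 / (gMinDeg G : ℝ) ^ 2 *
        lam G (fun a b : Fin k => ((⊤ : SimpleGraph (Fin k)).dist a b : ℝ)) := by
  subst hH'
  have : Nontrivial V := Fintype.one_lt_card_iff_nontrivial.mp hV
  have hδ : (0 : ℝ) < gMinDeg G := by exact_mod_cast gMinDeg_pos hG.preconnected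
  have hδΔ : (gMinDeg G : ℝ) ≤ gMaxDeg G := by exact_mod_cast gMinDeg_le_gMaxDeg G
  have hΔ : (0 : ℝ) < gMaxDeg G := hδ.trans_le hδΔ
  set dK : Fin k → Fin k → ℝ := fun a b => ((⊤ : SimpleGraph (Fin k)).dist a b : ℝ)
  set dH : Fin k → Fin k → ℝ := fun a b =>
    (((⊤ : SimpleGraph (Fin k)).deleteEdges {s(i, j)}).dist a b : ℝ)
  have hdist a b := top_deleteEdges_dist_le_two_mul (by simpa using hk) s(i, j) a b
  have hRf := Rf_le_sq_mul_Rf (G := G) (d := dK) (d' := dH) (c := 2)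
    (fun _ _ => Nat.cast_nonneg _)
    (fun a b => by simp only [dK, dH]; exact_mod_cast (hdist a b).1)
    (fun a b => by simp only [dK, dH]; exact_mod_cast (hdist a b).2)
  have hup := lam_le_mul_lam (by norm_num) fun f => (hRf f).1
  have hlow := lam_le_mul_lam (by norm_num) fun f => (hRf f).2
  have hlam := lam_nonneg (G := G) dK
  constructor
  · calc _ ≤ 1 / 4 * lam G dK := by
          refine mul_le_mul_of_nonneg_right ?_ hlam
          rw [div_le_iff₀ (by positivity)]
          nlinarith
      _ ≤ _ := by linarith
  · refine hup.trans (mul_le_mul_of_nonneg_right ?_ hlam)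
    rw [le_div_iff₀ (by positivity)]
    nlinarith

/-- For a connected finite simple graph `G` on at least two vertices with
maximum degree `Δ` and minimum degree `δ`, `H = K_k` (`k ≥ 3`) and `H'` obtained from `K_k`
by removing exactly one edge,
`(δ²/(4Δ²)) λ(G, K_k) ≤ λ(G, H') ≤ (4Δ²/δ²) λ(G, K_k)`. -/
theorem stmt_11 {V : Type*} [Fintype V] (G : SimpleGraph V)
    (hG : G.Connected) (hV : 2 ≤ Fintype.card V)
    (k : ℕ) (hk : 3 ≤ k) (i j : Fin k) (hij : i ≠ j)
    (H' : SimpleGraph (Fin k))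
    (hH' : H' = (⊤ : SimpleGraph (Fin k)).deleteEdges {s(i, j)}) :
    (gMinDeg G : ℝ) ^ 2 / (4 * (gMaxDeg G : ℝ) ^ 2) *
        lam G (fun a b : Fin k => ((⊤ : SimpleGraph (Fin k)).dist a b : ℝ))
      ≤ lam G (fun a b => (H'.dist a b : ℝ)) ∧
    lam G (fun a b => (H'.dist a b : ℝ)) ≤
      4 * (gMaxDeg G : ℝ) ^ 2 / (gMinDeg G : ℝ) ^ 2 *
        lam G (fun a b : Fin k => ((⊤ : SimpleGraph (Fin k)).dist a b : ℝ)) :=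
  stmt_11_general G hG hV k hk i j H' hH'
end

section
/- Let G be a connected finite simple graph with vol(G) ≥ 6, let a, b be distinct nonadjacent vertices of G, and let G' be the graph obtained from G by adding the edge {a,b}. Let H be a connected finite simple graph on at least two vertices with diameter D_H. Then λ(G', H) ≤ (1 + 2/vol(G)) · (1 + D_H²) · λ(G, H), and λ(G', H) ≥ (1 + 2/vol(G)) · max{ (vol(G) − 1) / (vol(G) − 1 + D_H² · (2·vol(G) + 1)), 1/4 } · λ(G, H). -/
open scoped Classical
open Finset

/-!
Write `R_f(G, H) = vol(G) · E / P` with `K u v = d_H(f u, f v)²`, `E = ∑_{u ~ v} K u v` and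
`P = ∑_{u, v} K u v · deg u · deg v` (both over ordered pairs). Adding the edge `ab` raises `vol`
by `2`, `E` by `2 K a b` and, as `deg a` and `deg b` grow by one, `P` by `2 Q_a + 2 Q_b + 2 K a b`
where `Q_c = ∑_u K u c · deg u`. For nonconstant `f`, connectivity of `G` and `H` gives `E ≥ 2`,
`K ≥ 1` across the level sets of `f` and hence `P ≥ 2 (vol - 1)`; moreover `K a b ≤ D_H²`,
`Q_c ≤ D_H² (vol - 1)` and each of `2 Q_a`, `2 Q_b`, `2 K a b` is at most `P`. These bound
`R_f(G + ab, H)` against `R_f(G, H)` for every `f`, and the bounds pass to the minima `λ`.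
-/

open SimpleGraph

section Lam

variable {V X : Type*} [Fintype V] (d : X → X → ℝ)

lemma lam_set_finite [Finite X] (G : SimpleGraph V) :
    {r | ∃ f : V → X, (∃ u v, f u ≠ f v) ∧ r = Rf G d f}.Finite :=
  (Set.finite_range fun f : V → X => Rf G d f).subset <| by rintro r ⟨f, -, rfl⟩; exact ⟨f, rfl⟩

lemma lam_le_Rf [Finite X] (G : SimpleGraph V) {f : V → X} (hf : ∃ u v, f u ≠ f v) :
    lam G d ≤ Rf G d f :=
  csInf_le (lam_set_finite d G).bddBelow ⟨f, hf, rfl⟩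

lemma exists_Rf_eq_lam [Finite X] (G : SimpleGraph V) (h : ∃ f : V → X, ∃ u v, f u ≠ f v) :
    ∃ f : V → X, (∃ u v, f u ≠ f v) ∧ lam G d = Rf G d f := by
  obtain ⟨f, hf⟩ := h
  exact Set.Nonempty.csInf_mem (by exact ⟨_, f, hf, rfl⟩) (lam_set_finite d G)

lemma lam_eq_zero (G : SimpleGraph V) (h : ¬∃ f : V → X, ∃ u v, f u ≠ f v) : lam G d = 0 := by
  have hempty : {r | ∃ f : V → X, (∃ u v, f u ≠ f v) ∧ r = Rf G d f} = ∅ :=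
    Set.eq_empty_of_forall_notMem fun _ ⟨f, hf, _⟩ => h ⟨f, hf⟩
  rw [lam, hempty, Real.sInf_empty]

lemma lam_le_mul_lam_s15 [Finite X] {G₁ G₂ : SimpleGraph V} {c : ℝ}
    (h : ∀ f : V → X, (∃ u v, f u ≠ f v) → Rf G₁ d f ≤ c * Rf G₂ d f) :
    lam G₁ d ≤ c * lam G₂ d := by
  by_cases hX : ∃ f : V → X, ∃ u v, f u ≠ f v
  · obtain ⟨f, hf, hlam⟩ := exists_Rf_eq_lam d G₂ hX
    rw [hlam]
    exact (lam_le_Rf d G₁ hf).trans (h f hf)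
  · simp [lam_eq_zero d _ hX]

lemma mul_lam_le_lam [Finite X] {G₁ G₂ : SimpleGraph V} {c : ℝ} (hc : 0 ≤ c)
    (h : ∀ f : V → X, (∃ u v, f u ≠ f v) → c * Rf G₂ d f ≤ Rf G₁ d f) :
    c * lam G₂ d ≤ lam G₁ d := by
  by_cases hX : ∃ f : V → X, ∃ u v, f u ≠ f v
  · obtain ⟨f, hf, hlam⟩ := exists_Rf_eq_lam d G₁ hX
    rw [hlam]
    exact (mul_le_mul_of_nonneg_left (lam_le_Rf d G₂ hf) hc).trans (h f hf)
  · simp [lam_eq_zero d _ hX]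

end Lam

section Kernel

variable {V : Type*} [Fintype V] (K : V → V → ℝ)

noncomputable def edgeSum (G : SimpleGraph V) : ℝ := ∑ u, ∑ v, if G.Adj u v then K u v else 0

def pairSum (w : V → ℝ) : ℝ := ∑ u, ∑ v, K u v * w u * w v

variable {K}

lemma add_le_sum_sum {F : V → V → ℝ} (hF : ∀ u v, 0 ≤ F u v) {x y : V} (hxy : x ≠ y) :
    F x y + F y x ≤ ∑ u, ∑ v, F u v := by
  rw [← Fintype.sum_prod_type' F]
  exact add_le_sum (f := fun p : V × V => F p.1 p.2) (fun p _ => hF p.1 p.2)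
    (mem_univ (x, y)) (mem_univ (y, x)) (by simp [hxy])

lemma sum_sum_ite_eq_and (x y : V) (c : ℝ) :
    (∑ u, ∑ v, if u = x ∧ v = y then c else 0) = c := by
  simp [ite_and]

lemma pairSum_add_indicators (hsymm : ∀ u v, K u v = K v u) (hdiag : ∀ u, K u u = 0)
    (w : V → ℝ) (a b : V) :
    pairSum K (fun v => w v + ((if v = a then 1 else 0) + (if v = b then 1 else 0))) =
      pairSum K w + 2 * ∑ u, K u a * w u + 2 * ∑ u, K u b * w u + 2 * K a b := by
  have hcol (c : V) : ∑ v, K c v * w v = ∑ u, K u c * w u := by simp only [hsymm c]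
  simp only [pairSum, mul_add, add_mul, mul_ite, mul_one, mul_zero, ite_mul, zero_mul,
    sum_add_distrib, Fintype.sum_ite_eq', sum_ite_irrel, sum_const_zero,
    hdiag, hcol, hsymm b a]
  ring

lemma two_mul_sum_le_pairSum (hsymm : ∀ u v, K u v = K v u) (hdiag : ∀ u, K u u = 0)
    (hK : ∀ u v, 0 ≤ K u v) {w : V → ℝ} (hw : ∀ v, 1 ≤ w v) (c : V) :
    2 * ∑ u, K u c * w u ≤ pairSum K w := by
  have hw0 (v : V) : 0 ≤ w v := zero_le_one.trans (hw v)
  have hpt (u v : V) : (if v = c then K u c * w u else 0) + (if u = c then K c v * w v else 0) ≤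
      K u v * w u * w v := by
    by_cases hu : u = c <;> by_cases hv : v = c
    · simp [hu, hv, hdiag]
    · simpa [hu, hv, mul_right_comm] using
        le_mul_of_one_le_right (mul_nonneg (hK c v) (hw0 v)) (hw c)
    · simpa [hu, hv] using le_mul_of_one_le_right (mul_nonneg (hK u c) (hw0 u)) (hw c)
    · simpa [hu, hv] using mul_nonneg (mul_nonneg (hK u v) (hw0 u)) (hw0 v)
  calc 2 * ∑ u, K u c * w u
      = ∑ u, ∑ v, ((if v = c then K u c * w u else 0) + (if u = c then K c v * w v else 0)) := by
        simp only [sum_add_distrib, Fintype.sum_ite_eq', sum_ite_irrel,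
          sum_const_zero, hsymm c]
        ring
    _ ≤ pairSum K w := sum_le_sum fun u _ => sum_le_sum fun v _ => hpt u v

lemma sum_le_mul_sum_sub_one {c : V} (hdiag : K c c = 0) {M : ℝ} (hM : ∀ u, K u c ≤ M)
    {w : V → ℝ} (hw : ∀ v, 1 ≤ w v) :
    ∑ u, K u c * w u ≤ M * (∑ v, w v - 1) := by
  have hM0 : 0 ≤ M := hdiag ▸ hM c
  calc ∑ u, K u c * w u = ∑ u ∈ univ.erase c, K u c * w u :=
        (sum_erase _ (by simp [hdiag])).symm
    _ ≤ ∑ u ∈ univ.erase c, M * w u :=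
        sum_le_sum fun u _ => mul_le_mul_of_nonneg_right (hM u) (zero_le_one.trans (hw u))
    _ = M * (∑ v, w v - w c) := by rw [← mul_sum, sum_erase_eq_sub (mem_univ c)]
    _ ≤ M * (∑ v, w v - 1) := by gcongr; exact hw c

lemma two_mul_le_pairSum (hsymm : ∀ u v, K u v = K v u) (hK : ∀ u v, 0 ≤ K u v)
    {w : V → ℝ} (hw : ∀ v, 1 ≤ w v) {a b : V} (hab : a ≠ b) :
    2 * K a b ≤ pairSum K w := by
  have hw0 (v : V) : 0 ≤ w v := zero_le_one.trans (hw v)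
  have hsum := add_le_sum_sum (F := fun u v => K u v * w u * w v)
    (fun u v => mul_nonneg (mul_nonneg (hK u v) (hw0 u)) (hw0 v)) hab
  have hab' : K a b ≤ K a b * w a * w b := by
    rw [mul_assoc]
    exact le_mul_of_one_le_right (hK a b) (one_le_mul_of_one_le_of_one_le (hw a) (hw b))
  simp only [hsymm b a] at hsum
  unfold pairSum
  linarith

lemma two_mul_sum_sub_one_le_pairSum {X : Type*} {g : V → X} (hg : ∃ u v, g u ≠ g v)
    (hK1 : ∀ u v, g u ≠ g v → 1 ≤ K u v) (hK : ∀ u v, 0 ≤ K u v)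
    {w : V → ℝ} (hw : ∀ v, 1 ≤ w v) :
    2 * (∑ v, w v - 1) ≤ pairSum K w := by
  obtain ⟨u₀, v₀, hne⟩ := hg
  have hw0 (v : V) : 0 ≤ w v := zero_le_one.trans (hw v)
  -- `s + t = w` splits `w` along the level set of `g u₀`, and `P ≥ 2 (∑ s) (∑ t)`.
  set s : V → ℝ := fun u => if g u = g u₀ then w u else 0
  set t : V → ℝ := fun u => if g u = g u₀ then 0 else w u
  have hpt (u v : V) : s u * t v + t u * s v ≤ K u v * w u * w v := by
    rw [mul_assoc]
    by_cases hu : g u = g u₀ <;> by_cases hv : g v = g u₀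
    · simpa [s, t, hu, hv] using mul_nonneg (hK u v) (mul_nonneg (hw0 u) (hw0 v))
    · simpa [s, t, hu, hv] using le_mul_of_one_le_left (mul_nonneg (hw0 u) (hw0 v))
        (hK1 u v (hu.trans_ne (Ne.symm hv)))
    · simpa [s, t, hu, hv] using le_mul_of_one_le_left (mul_nonneg (hw0 u) (hw0 v))
        (hK1 u v (hv ▸ hu))
    · simpa [s, t, hu, hv] using mul_nonneg (hK u v) (mul_nonneg (hw0 u) (hw0 v))
  have hst : ∑ u, s u + ∑ u, t u = ∑ v, w v := by
    rw [← sum_add_distrib]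
    exact sum_congr rfl fun u _ => by by_cases hu : g u = g u₀ <;> simp [s, t, hu]
  have hs1 : 1 ≤ ∑ u, s u := (hw u₀).trans <| by
    simpa [s] using single_le_sum (f := s) (fun u _ => by simp only [s]; split_ifs <;> simp [hw0])
      (mem_univ u₀)
  have ht1 : 1 ≤ ∑ u, t u := (hw v₀).trans <| by
    simpa [t, Ne.symm hne] using single_le_sum (f := t)
      (fun u _ => by simp only [t]; split_ifs <;> simp [hw0]) (mem_univ v₀)
  have hprod : 2 * ((∑ u, s u) * ∑ u, t u) ≤ pairSum K w :=
    calc 2 * ((∑ u, s u) * ∑ u, t u) = ∑ u, ∑ v, (s u * t v + t u * s v) := by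
          simp only [sum_add_distrib, ← mul_sum, ← sum_mul]; ring
      _ ≤ pairSum K w := sum_le_sum fun u _ => sum_le_sum fun v _ => hpt u v
  nlinarith [mul_nonneg (sub_nonneg.2 hs1) (sub_nonneg.2 ht1)]

lemma edgeSum_sup_edge (hsymm : ∀ u v, K u v = K v u) {G : SimpleGraph V} {a b : V}
    (hab : a ≠ b) (hn : ¬G.Adj a b) :
    edgeSum K (G ⊔ edge a b) = edgeSum K G + 2 * K a b := by
  have hpt (u v : V) : (if (G ⊔ edge a b).Adj u v then K u v else 0) =
      (if G.Adj u v then K u v else 0) + (if u = a ∧ v = b then K a b else 0) +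
        (if u = b ∧ v = a then K a b else 0) := by
    by_cases h1 : u = a ∧ v = b
    · obtain ⟨rfl, rfl⟩ := h1
      simp [edge_adj, hab, hn, Ne.symm hab]
    by_cases h2 : u = b ∧ v = a
    · obtain ⟨rfl, rfl⟩ := h2
      have hn' : ¬G.Adj u v := fun h => hn h.symm
      simp [edge_adj, hab, Ne.symm hab, hsymm u v, hn']
    simp [edge_adj, h1, h2]
  calc edgeSum K (G ⊔ edge a b)
      = ∑ u, ∑ v, ((if G.Adj u v then K u v else 0) + (if u = a ∧ v = b then K a b else 0) +
          (if u = b ∧ v = a then K a b else 0)) :=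
        sum_congr rfl fun u _ => sum_congr rfl fun v _ => by convert hpt u v
    _ = edgeSum K G + 2 * K a b := by
        simp only [sum_add_distrib, sum_sum_ite_eq_and, edgeSum]
        ring

lemma two_le_edgeSum {G : SimpleGraph V} (hG : G.Preconnected) {X : Type*} {g : V → X}
    (hg : ∃ u v, g u ≠ g v) (hK1 : ∀ u v, g u ≠ g v → 1 ≤ K u v) (hK : ∀ u v, 0 ≤ K u v) :
    2 ≤ edgeSum K G := by
  obtain ⟨u₀, v₀, hne⟩ := hg
  obtain ⟨p⟩ := hG u₀ v₀
  obtain ⟨⟨⟨x, y⟩, hxy⟩, -, hx, hy⟩ :=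
    p.exists_boundary_dart {x | g x = g u₀} rfl (Ne.symm hne)
  have hgxy : g x ≠ g y := fun h => hy (h.symm.trans hx)
  have hsum := add_le_sum_sum (F := fun u v => if G.Adj u v then K u v else 0)
    (fun u v => by split_ifs <;> simp [hK]) hxy.ne
  simp only [if_pos hxy, if_pos hxy.symm] at hsum
  unfold edgeSum
  linarith [hK1 x y hgxy, hK1 y x (Ne.symm hgxy)]

end Kernel

section Graph

variable {V : Type*} [Fintype V] {G : SimpleGraph V} {a b : V}

lemma gdeg_eq_degree (G : SimpleGraph V) (v : V) : gdeg G v = G.degree v := by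
  rw [gdeg, Set.ncard_eq_toFinset_card', ← card_neighborSet_eq_degree,
    Set.toFinset_card]

lemma one_le_gdeg [Nontrivial V] (hG : G.Preconnected) (v : V) : 1 ≤ gdeg G v :=
  gdeg_eq_degree G v ▸ hG.degree_pos_of_nontrivial v

lemma gdeg_sup_edge_left (hab : a ≠ b) (hn : ¬G.Adj a b) :
    gdeg (G ⊔ edge a b) a = gdeg G a + 1 := by
  have hnbhd : (G ⊔ edge a b).neighborSet a = insert b (G.neighborSet a) := by
    ext u
    by_cases hu : u = b <;> simp [hu, edge_adj, hab]
  rw [gdeg, hnbhd, Set.ncard_insert_of_notMem (s := G.neighborSet a) hn, gdeg]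

lemma gdeg_sup_edge (hab : a ≠ b) (hn : ¬G.Adj a b) (v : V) :
    (gdeg (G ⊔ edge a b) v : ℝ) =
      gdeg G v + ((if v = a then 1 else 0) + (if v = b then 1 else 0)) := by
  by_cases hva : v = a
  · subst hva
    simp [gdeg_sup_edge_left hab hn, hab]
  by_cases hvb : v = b
  · subst hvb
    rw [edge_comm, gdeg_sup_edge_left (Ne.symm hab) fun h => hn h.symm]
    simp [hva]
  · have hnbhd : (G ⊔ edge a b).neighborSet v = G.neighborSet v := by
      ext u
      simp [edge_adj, hva, hvb]
    simp [gdeg, hnbhd, hva, hvb]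

lemma gvol_sup_edge (hab : a ≠ b) (hn : ¬G.Adj a b) :
    (gvol (G ⊔ edge a b) : ℝ) = gvol G + 2 := by
  simp only [gvol, Nat.cast_sum, gdeg_sup_edge hab hn, sum_add_distrib, Fintype.sum_ite_eq']
  ring

end Graph

lemma mul_div_le_div_of_le {v c E E' P P' : ℝ} (hv : 0 < v) (hc : 0 < c) (hE : 0 ≤ E)
    (hEE' : E ≤ E') (hP' : 0 < P') (hPP' : c * P' ≤ P) :
    (1 + 2 / v) * c * (v * E / P) ≤ (v + 2) * E' / P' := by
  have hlhs : (1 + 2 / v) * c * (v * E / P) = (v + 2) * E / (P / c) := by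
    field_simp
  rw [hlhs]
  exact div_le_div₀ (mul_nonneg (by linarith) (hE.trans hEE')) (by gcongr) hP'
    (by rwa [le_div_iff₀' hc])

lemma div_le_mul_div_of_le_s15 {v c E E' P P' : ℝ} (hv : 0 < v) (hE' : 0 ≤ E') (hEE' : E' ≤ c * E)
    (hP : 0 < P) (hPP' : P ≤ P') :
    (v + 2) * E' / P' ≤ (1 + 2 / v) * c * (v * E / P) := by
  have hrhs : (1 + 2 / v) * c * (v * E / P) = (v + 2) * (c * E) / P := by
    field_simp
  rw [hrhs]
  exact div_le_div₀ (mul_nonneg (by linarith) (hE'.trans hEE')) (by gcongr) hP hPP'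

lemma sub_one_div_mul_add_le {v D P Qa Qb x : ℝ} (hv : 1 < v) (hP : 2 * (v - 1) ≤ P)
    (hQa : Qa ≤ D ^ 2 * (v - 1)) (hQb : Qb ≤ D ^ 2 * (v - 1)) (hx : x ≤ D ^ 2) :
    (v - 1) / (v - 1 + D ^ 2 * (2 * v + 1)) * (P + 2 * Qa + 2 * Qb + 2 * x) ≤ P := by
  have hv1 : 0 ≤ v - 1 := by linarith
  have hD : 0 ≤ D ^ 2 * (2 * v + 1) := mul_nonneg (sq_nonneg D) (by linarith)
  rw [div_mul_eq_mul_div, div_le_iff₀ (add_pos_of_pos_of_nonneg (by linarith) hD)]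
  -- `(v - 1)(2 Qa + 2 Qb + 2 x) ≤ 2 D² (v - 1)(2 v - 1) ≤ D² (2 v + 1) P`
  nlinarith [mul_le_mul_of_nonneg_left hQa hv1, mul_le_mul_of_nonneg_left hQb hv1,
    mul_le_mul_of_nonneg_left hx hv1, mul_le_mul_of_nonneg_left hP hD,
    mul_nonneg (sq_nonneg D) hv1]

section Distance

variable {V W : Type*} (H : SimpleGraph W)

noncomputable def distSq (H : SimpleGraph W) (f : V → W) (u v : V) : ℝ :=
  (H.dist (f u) (f v) : ℝ) ^ 2

lemma distSq_comm (f : V → W) (u v : V) : distSq H f u v = distSq H f v u := by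
  rw [distSq, distSq, dist_comm]

lemma distSq_self (f : V → W) (u : V) : distSq H f u u = 0 := by simp [distSq]

lemma distSq_nonneg (f : V → W) (u v : V) : 0 ≤ distSq H f u v := sq_nonneg _

lemma one_le_distSq {H} (hH : H.Connected) {f : V → W} {u v : V} (h : f u ≠ f v) :
    1 ≤ distSq H f u v :=
  one_le_pow₀ (Nat.one_le_cast.2 (hH.pos_dist_of_ne h))

lemma distSq_le_gDiam_sq [Fintype W] (f : V → W) (u v : V) :
    distSq H f u v ≤ (gDiam H : ℝ) ^ 2 := by
  unfold distSq
  gcongr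
  exact le_sup (f := fun p : W × W => H.dist p.1 p.2) (mem_univ (f u, f v))

variable {H} [Fintype V]

lemma Rf_eq (G : SimpleGraph V) (f : V → W) :
    Rf G (fun i j => (H.dist i j : ℝ)) f =
      gvol G * edgeSum (distSq H f) G / pairSum (distSq H f) (fun v => gdeg G v) := by
  have hpairs : (∑ u, ∑ v, if u ≠ v then
      (H.dist (f u) (f v) : ℝ) ^ 2 * (gdeg G u : ℝ) * (gdeg G v : ℝ) else 0) =
      pairSum (distSq H f) (fun v => gdeg G v) :=
    sum_congr rfl fun u _ => sum_congr rfl fun v _ => by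
      by_cases huv : u = v <;> simp [huv, distSq]
  rw [Rf, hpairs, mul_div_assoc, div_div_div_cancel_right₀ two_ne_zero, ← mul_div_assoc]
  rfl

variable {G : SimpleGraph V} {a b : V}

lemma Rf_sup_edge_eq (hab : a ≠ b) (hn : ¬G.Adj a b) (f : V → W) :
    Rf (G ⊔ edge a b) (fun i j => (H.dist i j : ℝ)) f =
      (gvol G + 2) * (edgeSum (distSq H f) G + 2 * distSq H f a b) /
        (pairSum (distSq H f) (fun v => gdeg G v) + 2 * ∑ u, distSq H f u a * gdeg G u +
          2 * ∑ u, distSq H f u b * gdeg G u + 2 * distSq H f a b) := by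
  rw [Rf_eq, gvol_sup_edge hab hn, edgeSum_sup_edge (distSq_comm H f) hab hn,
    funext (gdeg_sup_edge hab hn), pairSum_add_indicators (distSq_comm H f) (distSq_self H f)]

end Distance

section Bounds

variable {V W : Type*} [Fintype V] {H : SimpleGraph W} {G : SimpleGraph V} {a b : V} {f : V → W}

lemma gvol_eq_sum (G : SimpleGraph V) : (gvol G : ℝ) = ∑ v, (gdeg G v : ℝ) := by
  simp [gvol]

lemma two_le_gvol [Nontrivial V] (hG : G.Preconnected) : (2 : ℝ) ≤ gvol G := by
  obtain ⟨a, b, hab⟩ := exists_pair_ne V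
  have hsum := add_le_sum (f := fun v => (gdeg G v : ℝ)) (fun v _ => Nat.cast_nonneg _)
    (mem_univ a) (mem_univ b) hab
  have ha : (1 : ℝ) ≤ gdeg G a := Nat.one_le_cast.2 (one_le_gdeg hG a)
  have hb : (1 : ℝ) ≤ gdeg G b := Nat.one_le_cast.2 (one_le_gdeg hG b)
  rw [gvol_eq_sum]
  linarith

lemma two_mul_gvol_sub_one_le_pairSum [Nontrivial V] (hG : G.Preconnected) (hH : H.Connected)
    (hf : ∃ u v, f u ≠ f v) :
    2 * ((gvol G : ℝ) - 1) ≤ pairSum (distSq H f) (fun v => gdeg G v) := by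
  rw [gvol_eq_sum]
  exact two_mul_sum_sub_one_le_pairSum hf (fun u v => one_le_distSq hH) (distSq_nonneg H f)
    fun v => Nat.one_le_cast.2 (one_le_gdeg hG v)

variable [Fintype W]

lemma Rf_sup_edge_le (hG : G.Preconnected) (hab : a ≠ b) (hn : ¬G.Adj a b)
    (hH : H.Connected) (hf : ∃ u v, f u ≠ f v) :
    Rf (G ⊔ edge a b) (fun i j => (H.dist i j : ℝ)) f ≤
      (1 + 2 / gvol G) * (1 + gDiam H ^ 2) * Rf G (fun i j => (H.dist i j : ℝ)) f := by
  have : Nontrivial V := ⟨a, b, hab⟩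
  have hvol := two_le_gvol hG
  have hP := two_mul_gvol_sub_one_le_pairSum hG hH hf
  have hE := two_le_edgeSum hG hf (fun u v => one_le_distSq hH) (distSq_nonneg H f)
  have hx := distSq_le_gDiam_sq H f a b
  have hx0 := distSq_nonneg H f a b
  have hQa : 0 ≤ ∑ u, distSq H f u a * gdeg G u :=
    sum_nonneg fun u _ => mul_nonneg (distSq_nonneg H f u a) (Nat.cast_nonneg _)
  have hQb : 0 ≤ ∑ u, distSq H f u b * gdeg G u :=
    sum_nonneg fun u _ => mul_nonneg (distSq_nonneg H f u b) (Nat.cast_nonneg _)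
  rw [Rf_sup_edge_eq hab hn, Rf_eq]
  exact div_le_mul_div_of_le_s15 (by linarith) (by linarith) (by nlinarith) (by linarith)
    (by linarith)

lemma le_Rf_sup_edge (hG : G.Preconnected) (hab : a ≠ b) (hn : ¬G.Adj a b)
    (hH : H.Connected) (hf : ∃ u v, f u ≠ f v) :
    (1 + 2 / gvol G) *
        max (((gvol G : ℝ) - 1) / ((gvol G : ℝ) - 1 + (gDiam H : ℝ) ^ 2 * (2 * gvol G + 1)))
          (1 / 4) * Rf G (fun i j => (H.dist i j : ℝ)) f ≤
      Rf (G ⊔ edge a b) (fun i j => (H.dist i j : ℝ)) f := by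
  have : Nontrivial V := ⟨a, b, hab⟩
  have hw (v : V) : (1 : ℝ) ≤ gdeg G v := Nat.one_le_cast.2 (one_le_gdeg hG v)
  have hvol := two_le_gvol hG
  have hP := two_mul_gvol_sub_one_le_pairSum hG hH hf
  have hE := two_le_edgeSum hG hf (fun u v => one_le_distSq hH) (distSq_nonneg H f)
  have hx := distSq_le_gDiam_sq H f a b
  have hx0 := distSq_nonneg H f a b
  have hPx := two_mul_le_pairSum (distSq_comm H f) (distSq_nonneg H f) hw hab
  have hPQa := two_mul_sum_le_pairSum (distSq_comm H f) (distSq_self H f) (distSq_nonneg H f) hw a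
  have hPQb := two_mul_sum_le_pairSum (distSq_comm H f) (distSq_self H f) (distSq_nonneg H f) hw b
  have hQa := sum_le_mul_sum_sub_one (distSq_self H f a) (distSq_le_gDiam_sq H f · a) hw
  have hQb := sum_le_mul_sum_sub_one (distSq_self H f b) (distSq_le_gDiam_sq H f · b) hw
  rw [← gvol_eq_sum] at hQa hQb
  have hQa0 : 0 ≤ ∑ u, distSq H f u a * gdeg G u :=
    sum_nonneg fun u _ => mul_nonneg (distSq_nonneg H f u a) (Nat.cast_nonneg _)
  have hQb0 : 0 ≤ ∑ u, distSq H f u b * gdeg G u :=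
    sum_nonneg fun u _ => mul_nonneg (distSq_nonneg H f u b) (Nat.cast_nonneg _)
  rw [Rf_sup_edge_eq hab hn, Rf_eq]
  rcases max_choice
    (((gvol G : ℝ) - 1) / ((gvol G : ℝ) - 1 + (gDiam H : ℝ) ^ 2 * (2 * gvol G + 1))) (1 / 4)
    with h | h <;> rw [h] <;>
    refine mul_div_le_div_of_le (by linarith) ?_ (by linarith) (by linarith) (by linarith) ?_
  · exact div_pos (by linarith) (add_pos_of_pos_of_nonneg (by linarith) (by positivity))
  · exact sub_one_div_mul_add_le (by linarith) hP hQa hQb hx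
  · norm_num
  · linarith

end Bounds

theorem stmt_15_general {V W : Type*} [Fintype V] [Fintype W]
    (G : SimpleGraph V) (hG : G.Connected)
    (a b : V) (hab : a ≠ b) (hnadj : ¬ G.Adj a b)
    (G' : SimpleGraph V) (hG' : G' = G ⊔ SimpleGraph.fromEdgeSet {s(a, b)})
    (H : SimpleGraph W) (hH : H.Connected) :
    lam G' (fun i j => (H.dist i j : ℝ)) ≤
      (1 + 2 / (gvol G : ℝ)) * (1 + (gDiam H : ℝ) ^ 2) * lam G (fun i j => (H.dist i j : ℝ)) ∧
    lam G' (fun i j => (H.dist i j : ℝ)) ≥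
      (1 + 2 / (gvol G : ℝ)) *
        max (((gvol G : ℝ) - 1) /
              ((gvol G : ℝ) - 1 + (gDiam H : ℝ) ^ 2 * (2 * (gvol G : ℝ) + 1))) (1 / 4) *
        lam G (fun i j => (H.dist i j : ℝ)) := by
  subst hG'
  exact ⟨lam_le_mul_lam_s15 _ fun f hf => Rf_sup_edge_le hG.preconnected hab hnadj hH hf,
    mul_lam_le_lam _ (by positivity) fun f hf => le_Rf_sup_edge hG.preconnected hab hnadj hH hf⟩

/-- Let `G` be connected with `vol(G) ≥ 6`, let `a ≠ b` be nonadjacent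
vertices of `G`, and let `G'` be `G` together with the edge `{a,b}`.  For any connected
graph `H` on at least two vertices with diameter `D_H`,
`λ(G',H) ≤ (1 + 2/vol(G))(1 + D_H²) λ(G,H)` and
`λ(G',H) ≥ (1 + 2/vol(G)) · max{(vol(G)-1)/(vol(G)-1+D_H²(2 vol(G)+1)), 1/4} · λ(G,H)`. -/
theorem stmt_15 {V W : Type*} [Fintype V] [Fintype W]
    (G : SimpleGraph V) (hG : G.Connected) (hvol : 6 ≤ gvol G)
    (a b : V) (hab : a ≠ b) (hnadj : ¬ G.Adj a b)
    (G' : SimpleGraph V) (hG' : G' = G ⊔ SimpleGraph.fromEdgeSet {s(a, b)})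
    (H : SimpleGraph W) (hH : H.Connected) (hW : 2 ≤ Fintype.card W) :
    lam G' (fun i j => (H.dist i j : ℝ)) ≤
      (1 + 2 / (gvol G : ℝ)) * (1 + (gDiam H : ℝ) ^ 2) * lam G (fun i j => (H.dist i j : ℝ)) ∧
    lam G' (fun i j => (H.dist i j : ℝ)) ≥
      (1 + 2 / (gvol G : ℝ)) *
        max (((gvol G : ℝ) - 1) /
              ((gvol G : ℝ) - 1 + (gDiam H : ℝ) ^ 2 * (2 * (gvol G : ℝ) + 1))) (1 / 4) *
        lam G (fun i j => (H.dist i j : ℝ)) :=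
  stmt_15_general G hG a b hab hnadj G' hG' H hH
end
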